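/- arXiv:1006.2502 — 4 statements merged into one kernel-verified Lean document; each statement's English description precedes it below -/
import Mathlib

section
/- There exist entanglement-breaking channels which are not entanglement-annihilating: if ω is an entangled state on ℂ^{d_A}⊗ℂ^{d_B}, then the constant channel F[X] = tr(X)·ω is entanglement-breaking (as a channel on the composite system ℂ^{d_A·d_B}) but not entanglement-annihilating; moreover, for any channel G on ℂ^{d_A}⊗ℂ^{d_B}, the composition F∘G is entanglement-breaking but not entanglement-annihilating. -/
open Matrix
open scoped Kronecker ComplexOrder

/-- A quantum state: a positive semidefinite matrix of unit trace. -/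
def IsState {ι : Type} [Fintype ι] (ρ : Matrix ι ι ℂ) : Prop :=
  ρ.PosSemidef ∧ ρ.trace = 1

/-- Separability of a bipartite state across the `ιA | ιB` cut: a finite convex
combination of Kronecker products of states. -/
def IsSep {ιA ιB : Type} [Fintype ιA] [Fintype ιB]
    (ω : Matrix (ιA × ιB) (ιA × ιB) ℂ) : Prop :=
  ∃ (m : ℕ) (p : Fin m → ℝ) (ξ : Fin m → Matrix ιA ιA ℂ) (ζ : Fin m → Matrix ιB ιB ℂ),
    (∀ j, 0 ≤ p j) ∧ ((∑ j, p j) = 1) ∧ (∀ j, IsState (ξ j)) ∧ (∀ j, IsState (ζ j)) ∧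
    ω = ∑ j, (p j : ℂ) • (ξ j ⊗ₖ ζ j)

/-- The extension `E ⊗ id` of a map `E` by a trivial action on an `n`-dimensional ancilla. -/
def tensorId {ι : Type} (E : Matrix ι ι ℂ → Matrix ι ι ℂ) (n : ℕ)
    (X : Matrix (ι × Fin n) (ι × Fin n) ℂ) : Matrix (ι × Fin n) (ι × Fin n) ℂ :=
  Matrix.of fun p q => E (Matrix.of fun a c => X (a, p.2) (c, q.2)) p.1 q.1

/-- A quantum channel: a linear, trace-preserving, completely positive map. -/
def IsChannel {ι : Type} [Fintype ι] (E : Matrix ι ι ℂ → Matrix ι ι ℂ) : Prop :=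
  (∀ (c : ℂ) (X Y : Matrix ι ι ℂ), E (c • X + Y) = c • E X + E Y) ∧
  (∀ X, (E X).trace = X.trace) ∧
  (∀ (n : ℕ) (X : Matrix (ι × Fin n) (ι × Fin n) ℂ), X.PosSemidef → (tensorId E n X).PosSemidef)

/-- Entanglement-breaking channel: `E ⊗ id` maps every state to a separable state,
for every ancilla dimension `n ≥ 1`. -/
def IsEB {ι : Type} [Fintype ι] (E : Matrix ι ι ℂ → Matrix ι ι ℂ) : Prop :=
  ∀ (n : ℕ), 0 < n → ∀ ω : Matrix (ι × Fin n) (ι × Fin n) ℂ,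
    IsState ω → IsSep (tensorId E n ω)

/-- Entanglement-annihilating channel on a bipartite system: every state is mapped
to a separable state. -/
def IsEA {ιA ιB : Type} [Fintype ιA] [Fintype ιB]
    (E : Matrix (ιA × ιB) (ιA × ιB) ℂ → Matrix (ιA × ιB) (ιA × ιB) ℂ) : Prop :=
  ∀ ω : Matrix (ιA × ιB) (ιA × ιB) ℂ, IsState ω → IsSep (E ω)

/-- The map `F ⊗ id` acting as `F` on the first factor of a bipartite system. -/
def rTensor {ιA ιB : Type} (F : Matrix ιA ιA ℂ → Matrix ιA ιA ℂ)
    (X : Matrix (ιA × ιB) (ιA × ιB) ℂ) : Matrix (ιA × ιB) (ιA × ιB) ℂ :=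
  Matrix.of fun p q => F (Matrix.of fun a c => X (a, p.2) (c, q.2)) p.1 q.1

/-- The map `id ⊗ F` acting as `F` on the second factor of a bipartite system. -/
def lTensor {ιA ιB : Type} (F : Matrix ιB ιB ℂ → Matrix ιB ιB ℂ)
    (X : Matrix (ιA × ιB) (ιA × ιB) ℂ) : Matrix (ιA × ιB) (ιA × ιB) ℂ :=
  Matrix.of fun p q => F (Matrix.of fun b d => X (p.1, b) (q.1, d)) p.2 q.2

/-- The local map `E ⊗ F` on a bipartite system (for linear `E`, `F` this is the
usual tensor product map `(id ⊗ F) ∘ (E ⊗ id)`). -/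
def tensorMap {ιA ιB : Type} (E : Matrix ιA ιA ℂ → Matrix ιA ιA ℂ)
    (F : Matrix ιB ιB ℂ → Matrix ιB ιB ℂ)
    (X : Matrix (ιA × ιB) (ιA × ιB) ℂ) : Matrix (ιA × ιB) (ιA × ιB) ℂ :=
  lTensor F (rTensor E X)

/-- `k`-fold Kronecker product of single-particle matrices. -/
def kronPow {d k : ℕ} (ρ : Fin k → Matrix (Fin d) (Fin d) ℂ) :
    Matrix (Fin k → Fin d) (Fin k → Fin d) ℂ :=
  Matrix.of fun i j => ∏ t, ρ t (i t) (j t)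

/-- Full separability of a `k`-partite state: a finite convex combination of
`k`-fold Kronecker products of single-particle states. -/
def IsFullySep {d k : ℕ} (ω : Matrix (Fin k → Fin d) (Fin k → Fin d) ℂ) : Prop :=
  ∃ (m : ℕ) (p : Fin m → ℝ) (ρ : Fin m → Fin k → Matrix (Fin d) (Fin d) ℂ),
    (∀ j, 0 ≤ p j) ∧ ((∑ j, p j) = 1) ∧ (∀ j t, IsState (ρ j t)) ∧
    ω = ∑ j, (p j : ℂ) • kronPow (ρ j)

/-- The map applying `E` to the `t`-th particle of a `k`-partite system. -/
def applyAt {d k : ℕ} (E : Matrix (Fin d) (Fin d) ℂ → Matrix (Fin d) (Fin d) ℂ) (t : Fin k)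
    (X : Matrix (Fin k → Fin d) (Fin k → Fin d) ℂ) :
    Matrix (Fin k → Fin d) (Fin k → Fin d) ℂ :=
  Matrix.of fun i j =>
    E (Matrix.of fun a b => X (Function.update i t a) (Function.update j t b)) (i t) (j t)

/-- The `k`-fold tensor power `E ⊗ ⋯ ⊗ E` of a single-particle map `E`,
obtained by applying `E` to each of the `k` particles. -/
def tensorPow {d : ℕ} (E : Matrix (Fin d) (Fin d) ℂ → Matrix (Fin d) (Fin d) ℂ) (k : ℕ)
    (X : Matrix (Fin k → Fin d) (Fin k → Fin d) ℂ) :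
    Matrix (Fin k → Fin d) (Fin k → Fin d) ℂ :=
  (List.finRange k).foldr (applyAt E) X

/-- The qubit depolarizing channel `E_λ[X] = λ X + (1-λ) tr(X) I/2`. -/
noncomputable def depol (lam : ℝ) (X : Matrix (Fin 2) (Fin 2) ℂ) : Matrix (Fin 2) (Fin 2) ℂ :=
  (lam : ℂ) • X + ((1 - lam : ℝ) : ℂ) • X.trace • ((2 : ℂ)⁻¹ • (1 : Matrix (Fin 2) (Fin 2) ℂ))

/-- The maximally entangled two-qubit vector `(|00⟩ + |11⟩)/√2`. -/
noncomputable def psiPlus : (Fin 2 × Fin 2) → ℂ :=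
  fun p => if p.1 = p.2 then ((Real.sqrt 2 : ℝ) : ℂ)⁻¹ else 0

/-- The projection onto the maximally entangled two-qubit vector. -/
noncomputable def Pplus : Matrix (Fin 2 × Fin 2) (Fin 2 × Fin 2) ℂ :=
  Matrix.vecMulVec psiPlus (star psiPlus)

/-- Partial transposition on the second qubit of a two-qubit matrix. -/
def ptB (X : Matrix (Fin 2 × Fin 2) (Fin 2 × Fin 2) ℂ) :
    Matrix (Fin 2 × Fin 2) (Fin 2 × Fin 2) ℂ :=
  Matrix.of fun p q => X (p.1, q.2) (q.1, p.2)

/-- Partial transposition on the first factor (qubit 1 versus qubits 2,3). -/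
def pt1 (X : Matrix (Fin 2 × Fin 2 × Fin 2) (Fin 2 × Fin 2 × Fin 2) ℂ) :
    Matrix (Fin 2 × Fin 2 × Fin 2) (Fin 2 × Fin 2 × Fin 2) ℂ :=
  Matrix.of fun p q => X (q.1, p.2) (p.1, q.2)

/-- The three-qubit GHZ vector `(|000⟩ + |111⟩)/√2`. -/
noncomputable def ghzVec : (Fin 2 × Fin 2 × Fin 2) → ℂ :=
  fun p => if p.1 = p.2.1 ∧ p.2.1 = p.2.2 then ((Real.sqrt 2 : ℝ) : ℂ)⁻¹ else 0

/-- The three-qubit GHZ state `|GHZ⟩⟨GHZ|`. -/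
noncomputable def ghzState : Matrix (Fin 2 × Fin 2 × Fin 2) (Fin 2 × Fin 2 × Fin 2) ℂ :=
  Matrix.vecMulVec ghzVec (star ghzVec)


set_option maxHeartbeats 1600000 in
/-- Auxiliary: any map of the form `X ↦ (H X).trace • ω` with `H` trace-preserving
and `ω` a state is entanglement-breaking. -/
lemma eb_const_aux {dA dB : ℕ}
    (ω : Matrix (Fin dA × Fin dB) (Fin dA × Fin dB) ℂ) (hω : IsState ω)
    (H : Matrix (Fin dA × Fin dB) (Fin dA × Fin dB) ℂ →
        Matrix (Fin dA × Fin dB) (Fin dA × Fin dB) ℂ)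
    (hH : ∀ X, (H X).trace = X.trace) :
    IsEB (fun X : Matrix (Fin dA × Fin dB) (Fin dA × Fin dB) ℂ => (H X).trace • ω) := by
  intro n hn σ hσ
  -- the partial trace of σ over the first factor
  set τ : Matrix (Fin n) (Fin n) ℂ :=
    Matrix.of fun b d => ∑ a : Fin dA × Fin dB, σ (a, b) (a, d) with hτ
  have hτsum : τ = ∑ a : Fin dA × Fin dB,
      σ.submatrix (fun b => (a, b)) (fun b => (a, b)) := by
    ext b d
    rw [Matrix.sum_apply]
    rfl
  have hτpsd : τ.PosSemidef := by
    rw [hτsum]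
    apply Finset.sum_induction _ _ (fun A B hA hB => hA.add hB) Matrix.PosSemidef.zero
    intro a _
    exact hσ.1.submatrix _
  have hτtr : τ.trace = 1 := by
    have : τ.trace = σ.trace := by
      simp only [Matrix.trace, Matrix.diag, hτ, Matrix.of_apply]
      rw [Fintype.sum_prod_type]
      exact Finset.sum_comm
    rw [this, hσ.2]
  refine ⟨1, fun _ => 1, fun _ => ω, fun _ => τ, fun _ => zero_le_one, by simp,
    fun _ => hω, fun _ => ⟨hτpsd, hτtr⟩, ?_⟩
  ext ⟨p1, p2⟩ ⟨q1, q2⟩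
  simp only [tensorId, Matrix.of_apply, Matrix.smul_apply, Fin.sum_univ_one,
    Finset.sum_apply, Matrix.kroneckerMap_apply, Complex.ofReal_one, one_smul,
    smul_eq_mul]
  rw [hH]
  simp only [Matrix.trace, Matrix.diag, Matrix.of_apply, hτ]
  ring

/-- The constant channel onto an entangled state `ω` of a bipartite
system is entanglement-breaking but not entanglement-annihilating, and so is its
composition with any channel applied first. -/
theorem stmt_8 (dA dB : ℕ)
    (ω : Matrix (Fin dA × Fin dB) (Fin dA × Fin dB) ℂ)
    (hω : IsState ω) (hent : ¬ IsSep ω) :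
    IsEB (fun X : Matrix (Fin dA × Fin dB) (Fin dA × Fin dB) ℂ => X.trace • ω) ∧
    ¬ IsEA (fun X : Matrix (Fin dA × Fin dB) (Fin dA × Fin dB) ℂ => X.trace • ω) ∧
    (∀ G : Matrix (Fin dA × Fin dB) (Fin dA × Fin dB) ℂ →
        Matrix (Fin dA × Fin dB) (Fin dA × Fin dB) ℂ, IsChannel G →
      IsEB ((fun X : Matrix (Fin dA × Fin dB) (Fin dA × Fin dB) ℂ => X.trace • ω) ∘ G) ∧
      ¬ IsEA ((fun X : Matrix (Fin dA × Fin dB) (Fin dA × Fin dB) ℂ => X.trace • ω) ∘ G)) := by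
  refine ⟨eb_const_aux ω hω id (fun _ => rfl), ?_, fun G hG => ⟨eb_const_aux ω hω G hG.2.1, ?_⟩⟩
  · intro hEA
    apply hent
    have := hEA ω hω
    simpa [hω.2] using this
  · intro hEA
    apply hent
    have := hEA ω hω
    simpa [hG.2.1, hω.2] using this
end

section
/- For every k ≥ 2, the k-fold tensor product E^{⊗k} of a channel E on ℂ^d is an entanglement-breaking channel on (ℂ^d)^{⊗k} if and only if E itself is entanglement-breaking; that is, T_{k-LEB} = T¹_{EB} for all k. -/
open Matrix
open scoped Kronecker ComplexOrder

/-!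
If `E` is entanglement-breaking, so is `E^{⊗(k+1)}`: apply `E` first to the last particle,
treating the other particles together with the ancilla as a larger ancilla. This leaves a
mixture of products `ξ ⊗ ζ`, and by induction `E^{⊗k} ⊗ id` maps each `ζ` to a separable state.

Conversely, let `E^{⊗k}` be entanglement-breaking with `k ≥ 1`. Pad a state `ω` of one particle
and the ancilla with a pure state on the other particles. `E^{⊗k} ⊗ id` maps the padded state to
`(E ⊗ id) ω` tensored with the images of the pure state, which have trace one, so tracing out the
other particles recovers `(E ⊗ id) ω`; partial traces of separable states are separable.
-/

theorem IsLinearMap.of_smul_add {R M N : Type*} [Ring R] [AddCommGroup M] [AddCommGroup N]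
    [Module R M] [Module R N] {F : M → N} (h : ∀ (c : R) (X Y : M), F (c • X + Y) = c • F X + F Y) :
    IsLinearMap R F := by
  have map_zero : F 0 = 0 := by simpa using h 1 0 0
  exact ⟨fun X Y => by simpa using h 1 X Y, fun c X => by simpa [map_zero] using h c X 0⟩

theorem IsLinearMap.map_sum_smul {R M N ι : Type*} [Semiring R] [AddCommMonoid M]
    [AddCommMonoid N] [Module R M] [Module R N] {F : M → N} (hF : IsLinearMap R F)
    (s : Finset ι) (c : ι → R) (X : ι → M) : F (∑ i ∈ s, c i • X i) = ∑ i ∈ s, c i • F (X i) := by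
  rw [← IsLinearMap.mk'_apply hF, map_sum]
  simp

theorem IsLinearMap.foldr {R M τ : Type*} [Semiring R] [AddCommMonoid M] [Module R M]
    {f : τ → M → M} (hf : ∀ t, IsLinearMap R (f t)) (l : List τ) :
    IsLinearMap R (fun X => l.foldr f X) := by
  induction l with
  | nil => exact LinearMap.id.isLinear
  | cons t l ih => exact ((IsLinearMap.mk' _ (hf t)).comp (IsLinearMap.mk' _ ih)).isLinear

theorem Fintype.sum_sum_update {ι β M : Type*} [DecidableEq ι] [Fintype ι] [Fintype β]
    [AddCommMonoid M] (i : ι) (h : (ι → β) → M) :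
    ∑ b, ∑ g, h (Function.update g i b) = Fintype.card β • ∑ g, h g := by
  let σ : Function.Involutive fun x : β × (ι → β) => (x.2 i, Function.update x.2 i x.1) :=
    fun x => by simp
  rw [← Fintype.sum_prod_type', ← Equiv.sum_comp σ.toPerm]
  simp [Fintype.sum_prod_type]

theorem Fintype.sum_prod_erase {ι β R : Type*} [DecidableEq ι] [Fintype ι] [Fintype β]
    [CommSemiring R] (i : ι) (f : ι → β → R) :
    ∑ g : ι → β, ∏ t ∈ Finset.univ.erase i, f t (g t)
      = Fintype.card β * ∏ t ∈ Finset.univ.erase i, ∑ b, f t b := by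
  have hpad (F : ι → R) : ∏ t ∈ Finset.univ.erase i, F t = ∏ t, if t = i then 1 else F t := by
    rw [← Finset.mul_prod_erase _ _ (Finset.mem_univ i), if_pos rfl, one_mul]
    exact Finset.prod_congr rfl fun t ht => (if_neg (Finset.ne_of_mem_erase ht)).symm
  rw [Finset.sum_congr rfl fun g _ => hpad fun t => f t (g t),
    ← Fintype.prod_sum (fun t b => if t = i then (1 : R) else f t b),
    ← Finset.mul_prod_erase _ _ (Finset.mem_univ i)]
  simp only [if_pos, Finset.sum_const, Finset.card_univ, nsmul_eq_mul, mul_one]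
  congr 1
  exact Finset.prod_congr rfl fun t ht => by simp [Finset.ne_of_mem_erase ht]

theorem isLinearMap_tensorId {ι : Type} {F : Matrix ι ι ℂ → Matrix ι ι ℂ} (hF : IsLinearMap ℂ F)
    (n : ℕ) : IsLinearMap ℂ (tensorId F n) := by
  refine ⟨fun X Y => ?_, fun c X => ?_⟩ <;> ext p q
  · exact congrFun₂ (hF.map_add _ _) p.1 q.1
  · exact congrFun₂ (hF.map_smul c _) p.1 q.1

theorem isLinearMap_applyAt {d k : ℕ} {F : Matrix (Fin d) (Fin d) ℂ → Matrix (Fin d) (Fin d) ℂ}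
    (hF : IsLinearMap ℂ F) (t : Fin k) : IsLinearMap ℂ (applyAt F t) := by
  refine ⟨fun X Y => ?_, fun c X => ?_⟩ <;> ext i j
  · exact congrFun₂ (hF.map_add _ _) (i t) (j t)
  · exact congrFun₂ (hF.map_smul c _) (i t) (j t)

section Separability

variable {ι κ ιA ιB : Type} [Fintype ι] [Fintype κ] [Fintype ιA] [Fintype ιB]

theorem IsState.nonempty {ρ : Matrix ι ι ℂ} (hρ : IsState ρ) : Nonempty ι := by
  by_contra h
  rw [not_nonempty_iff] at h
  simpa [Matrix.trace] using hρ.2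

theorem IsState.submatrix_equiv {ρ : Matrix ι ι ℂ} (hρ : IsState ρ) (e : κ ≃ ι) :
    IsState (ρ.submatrix e e) :=
  ⟨hρ.1.submatrix e, by simpa [Matrix.trace, e.sum_comp (fun i => ρ i i)] using hρ.2⟩

theorem IsState.kronecker {A : Matrix ι ι ℂ} {B : Matrix κ κ ℂ}
    (hA : IsState A) (hB : IsState B) : IsState (A ⊗ₖ B) :=
  ⟨hA.1.kronecker hB.1, by rw [trace_kronecker, hA.2, hB.2, mul_one]⟩

theorem isSep_sum_smul {m : ℕ} {p : Fin m → ℝ} {ω : Fin m → Matrix (ιA × ιB) (ιA × ιB) ℂ}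
    (hp : ∀ j, 0 ≤ p j) (hp1 : ∑ j, p j = 1) (hω : ∀ j, IsSep (ω j)) :
    IsSep (∑ j, (p j : ℂ) • ω j) := by
  choose mω q ξ ζ hq hq1 hξ hζ hω using hω
  let e := Fintype.equivFin (Σ j, Fin (mω j))
  refine ⟨_, fun i => p (e.symm i).1 * q _ (e.symm i).2, fun i => ξ _ (e.symm i).2,
    fun i => ζ _ (e.symm i).2, fun i => mul_nonneg (hp _) (hq _ _), ?_, fun i => hξ _ _,
    fun i => hζ _ _, ?_⟩
  · rw [e.symm.sum_comp (fun x => p x.1 * q x.1 x.2), Fintype.sum_sigma]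
    simp [← Finset.mul_sum, hq1, hp1]
  · rw [e.symm.sum_comp (fun x => ((p x.1 * q x.1 x.2 : ℝ) : ℂ) • (ξ x.1 x.2 ⊗ₖ ζ x.1 x.2)),
      Fintype.sum_sigma]
    simp only [hω, Finset.smul_sum, smul_smul, Complex.ofReal_mul]

theorem IsSep.submatrix_prodMap {ω : Matrix (ιA × ιB) (ιA × ιB) ℂ} (hω : IsSep ω)
    (e : κ ≃ ιB) : IsSep (ω.submatrix (Prod.map id e) (Prod.map id e)) := by
  obtain ⟨m, p, ξ, ζ, hp, hp1, hξ, hζ, rfl⟩ := hω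
  refine ⟨m, p, ξ, fun j => (ζ j).submatrix e e, hp, hp1, hξ, fun j => (hζ j).submatrix_equiv e, ?_⟩
  ext x y
  simp [Matrix.sum_apply]

theorem IsEB.isSep_rTensor {E : Matrix ι ι ℂ → Matrix ι ι ℂ} (hE : IsEB E)
    {ω : Matrix (ι × κ) (ι × κ) ℂ} (hω : IsState ω) : IsSep (rTensor E ω) := by
  have : Nonempty κ := (hω.nonempty).map Prod.snd
  let e := Fintype.equivFin κ
  have hsep : IsSep ((rTensor E ω).submatrix (Prod.map id e.symm) (Prod.map id e.symm)) :=
    hE _ Fintype.card_pos _ (hω.submatrix_equiv ((Equiv.refl ι).prodCongr e.symm))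
  simpa [Matrix.submatrix_submatrix, Prod.map_comp_map] using hsep.submatrix_prodMap e

theorem IsState.isSep_of_unique [Unique ιA]
    {ω : Matrix (ιA × ιB) (ιA × ιB) ℂ} (hω : IsState ω) : IsSep ω := by
  refine ⟨1, fun _ => 1, fun _ => 1, fun _ => ω.submatrix (Equiv.uniqueProd ιB ιA).symm
    (Equiv.uniqueProd ιB ιA).symm, fun _ => zero_le_one, by simp,
    fun _ => ⟨PosSemidef.one, by simp⟩, fun _ => hω.submatrix_equiv _, ?_⟩
  ext ⟨a, b⟩ ⟨a', b'⟩
  simp [Subsingleton.elim a default, Subsingleton.elim a' default]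

end Separability

section TensorPower

variable {d k n : ℕ} {E : Matrix (Fin d) (Fin d) ℂ → Matrix (Fin d) (Fin d) ℂ}

theorem tensorId_foldr (l : List (Fin k))
    (X : Matrix ((Fin k → Fin d) × Fin n) ((Fin k → Fin d) × Fin n) ℂ) :
    tensorId (fun Z => l.foldr (applyAt E) Z) n X
      = l.foldr (fun t => tensorId (applyAt E t) n) X := by
  induction l generalizing X with
  | nil => rfl
  | cons t l ih => exact congrArg (tensorId (applyAt E t) n) (ih X)

theorem tensorId_tensorPow (X : Matrix ((Fin k → Fin d) × Fin n) ((Fin k → Fin d) × Fin n) ℂ) :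
    tensorId (tensorPow E k) n X = (List.finRange k).foldr (fun t => tensorId (applyAt E t) n) X :=
  tensorId_foldr _ X

theorem tensorId_tensorPow_succ
    (X : Matrix ((Fin (k + 1) → Fin d) × Fin n) ((Fin (k + 1) → Fin d) × Fin n) ℂ) :
    tensorId (tensorPow E (k + 1)) n X = (List.finRange k).foldr
      (fun t => tensorId (applyAt E t.castSucc) n) (tensorId (applyAt E (Fin.last k)) n X) := by
  rw [tensorId_tensorPow, List.finRange_succ_last, List.foldr_append, List.foldr_map]
  rfl

end TensorPower

section SplitLast

variable {d k n : ℕ} {E : Matrix (Fin d) (Fin d) ℂ → Matrix (Fin d) (Fin d) ℂ}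

def splitLast (d k n : ℕ) : (Fin (k + 1) → Fin d) × Fin n ≃ Fin d × ((Fin k → Fin d) × Fin n) :=
  ((Fin.snocEquiv fun _ => Fin d).symm.prodCongr (Equiv.refl _)).trans (Equiv.prodAssoc _ _ _)

def snocKron (ξ : Matrix (Fin d) (Fin d) ℂ)
    (Z : Matrix ((Fin k → Fin d) × Fin n) ((Fin k → Fin d) × Fin n) ℂ) :
    Matrix ((Fin (k + 1) → Fin d) × Fin n) ((Fin (k + 1) → Fin d) × Fin n) ℂ :=
  (ξ ⊗ₖ Z).submatrix (splitLast d k n) (splitLast d k n)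

theorem tensorId_applyAt_last
    (ω : Matrix ((Fin (k + 1) → Fin d) × Fin n) ((Fin (k + 1) → Fin d) × Fin n) ℂ) :
    tensorId (applyAt E (Fin.last k)) n ω = (rTensor E (ω.submatrix (splitLast d k n).symm
      (splitLast d k n).symm)).submatrix (splitLast d k n) (splitLast d k n) := by
  ext ⟨f, r⟩ ⟨f', r'⟩
  have hsnoc (a : Fin d) (g : Fin (k + 1) → Fin d) :
      (Fin.snocEquiv fun _ => Fin d) (a, Fin.init g) = Function.update g (Fin.last k) a := by
    change Fin.snoc (Fin.init g) a = _
    rw [← Fin.update_snoc_last (x := g (Fin.last k)), Fin.snoc_init_self]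
  simp [tensorId, applyAt, rTensor, splitLast, hsnoc]

theorem tensorId_applyAt_castSucc_snocKron (hE : IsLinearMap ℂ E) (t : Fin k)
    (ξ : Matrix (Fin d) (Fin d) ℂ)
    (Z : Matrix ((Fin k → Fin d) × Fin n) ((Fin k → Fin d) × Fin n) ℂ) :
    tensorId (applyAt E t.castSucc) n (snocKron ξ Z)
      = snocKron ξ (tensorId (applyAt E t) n Z) := by
  ext ⟨f, r⟩ ⟨f', r'⟩
  have hne : t.castSucc ≠ Fin.last k := (Fin.castSucc_lt_last t).ne
  have hblock : (of fun a b =>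
      snocKron ξ Z (Function.update f t.castSucc a, r) (Function.update f' t.castSucc b, r'))
      = ξ (f (Fin.last k)) (f' (Fin.last k)) •
        of fun a b =>
          Z (Function.update (Fin.init f) t a, r) (Function.update (Fin.init f') t b, r') := by
    ext a b
    simp [snocKron, splitLast, Function.update_of_ne hne.symm, Fin.init_update_castSucc]
  simp only [tensorId, applyAt, of_apply]
  rw [hblock, hE.map_smul]
  rfl

theorem foldr_snocKron (hE : IsLinearMap ℂ E) (ξ : Matrix (Fin d) (Fin d) ℂ)
    (Z : Matrix ((Fin k → Fin d) × Fin n) ((Fin k → Fin d) × Fin n) ℂ) :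
    (List.finRange k).foldr (fun t => tensorId (applyAt E t.castSucc) n) (snocKron ξ Z)
      = snocKron ξ (tensorId (tensorPow E k) n Z) := by
  rw [tensorId_tensorPow]
  induction List.finRange k with
  | nil => rfl
  | cons t l ih => simp only [List.foldr_cons, ih, tensorId_applyAt_castSucc_snocKron hE]

theorem IsSep.snocKron {ξ : Matrix (Fin d) (Fin d) ℂ}
    {Z : Matrix ((Fin k → Fin d) × Fin n) ((Fin k → Fin d) × Fin n) ℂ} (hZ : IsSep Z)
    (hξ : IsState ξ) : IsSep (snocKron ξ Z) := by
  obtain ⟨m, p, η, θ, hp, hp1, hη, hθ, rfl⟩ := hZ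
  refine ⟨m, p, fun j => (ξ ⊗ₖ η j).submatrix (Fin.snocEquiv fun _ => Fin d).symm
    (Fin.snocEquiv fun _ => Fin d).symm, θ, hp, hp1,
    fun j => (hξ.kronecker (hη j)).submatrix_equiv _, hθ, ?_⟩
  ext ⟨f, r⟩ ⟨f', r'⟩
  simp [_root_.snocKron, splitLast, Matrix.sum_apply, Finset.mul_sum, mul_assoc, mul_left_comm]

end SplitLast

theorem isEB_tensorPow {d : ℕ} {E : Matrix (Fin d) (Fin d) ℂ → Matrix (Fin d) (Fin d) ℂ}
    (hE : IsLinearMap ℂ E) (hEB : IsEB E) : ∀ k, IsEB (tensorPow E k)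
  | 0 => fun _ _ _ hω => hω.isSep_of_unique
  | k + 1 => by
    intro n hn ω hω
    obtain ⟨m, p, ξ, ζ, hp, hp1, hξ, hζ, hdec⟩ :=
      hEB.isSep_rTensor (hω.submatrix_equiv (splitLast d k n).symm)
    have hsplit : tensorId (tensorPow E (k + 1)) n ω
        = ∑ j, (p j : ℂ) • snocKron (ξ j) (tensorId (tensorPow E k) n (ζ j)) := by
      have hlast :
          tensorId (applyAt E (Fin.last k)) n ω = ∑ j, (p j : ℂ) • snocKron (ξ j) (ζ j) := by
        rw [tensorId_applyAt_last, hdec]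
        ext x y
        simp [snocKron, Matrix.sum_apply]
      rw [tensorId_tensorPow_succ, hlast, (IsLinearMap.foldr (fun t : Fin k =>
        isLinearMap_tensorId (isLinearMap_applyAt hE t.castSucc) n) _).map_sum_smul]
      simp only [foldr_snocKron hE]
    rw [hsplit]
    exact isSep_sum_smul hp hp1 fun j => (isEB_tensorPow hE hEB k n hn _ (hζ j)).snocKron (hξ j)

section Marginal
variable {d k n : ℕ}

/- Both sums also run over the coordinate `g t₀`, which the summand ignores; `d⁻¹` compensates. -/
noncomputable def marginal (t₀ : Fin k) (ξ : Matrix (Fin k → Fin d) (Fin k → Fin d) ℂ) :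
    Matrix (Fin d) (Fin d) ℂ :=
  (d : ℂ)⁻¹ • ∑ g : Fin k → Fin d, ξ.submatrix (Function.update g t₀) (Function.update g t₀)

noncomputable def marginalId (t₀ : Fin k)
    (X : Matrix ((Fin k → Fin d) × Fin n) ((Fin k → Fin d) × Fin n) ℂ) :
    Matrix (Fin d × Fin n) (Fin d × Fin n) ℂ :=
  (d : ℂ)⁻¹ • ∑ g : Fin k → Fin d,
    X.submatrix (Prod.map (Function.update g t₀) id) (Prod.map (Function.update g t₀) id)

theorem IsState.marginal {ξ : Matrix (Fin k → Fin d) (Fin k → Fin d) ℂ} (hξ : IsState ξ)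
    (t₀ : Fin k) : IsState (marginal t₀ ξ) := by
  obtain ⟨f⟩ := hξ.nonempty
  have hd : (d : ℂ) ≠ 0 := Nat.cast_ne_zero.mpr (f t₀).pos.ne'
  refine ⟨(posSemidef_sum _ fun g _ => hξ.1.submatrix _).smul (by positivity), ?_⟩
  rw [_root_.marginal, trace_smul, trace_sum]
  simp only [Matrix.trace, diag_apply, submatrix_apply, smul_eq_mul]
  rw [Finset.sum_comm, Fintype.sum_sum_update t₀ fun g => ξ g g, Fintype.card_fin, nsmul_eq_mul,
    ← mul_assoc, inv_mul_cancel₀ hd, one_mul]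
  exact hξ.2

theorem marginalId_kronecker (t₀ : Fin k) (ξ : Matrix (Fin k → Fin d) (Fin k → Fin d) ℂ)
    (ζ : Matrix (Fin n) (Fin n) ℂ) : marginalId t₀ (ξ ⊗ₖ ζ) = marginal t₀ ξ ⊗ₖ ζ := by
  ext x y
  simp [marginalId, marginal, Matrix.sum_apply, Finset.mul_sum, Finset.sum_mul, mul_assoc]

theorem isLinearMap_marginalId (t₀ : Fin k) :
    IsLinearMap ℂ (marginalId (d := d) (n := n) t₀) :=
  ⟨fun X Y => by simp [marginalId, submatrix_add, Finset.sum_add_distrib, smul_add],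
    fun c X => by simp [marginalId, submatrix_smul, Finset.smul_sum, smul_comm c]⟩

theorem IsSep.marginalId {X : Matrix ((Fin k → Fin d) × Fin n) ((Fin k → Fin d) × Fin n) ℂ}
    (hX : IsSep X) (t₀ : Fin k) : IsSep (marginalId t₀ X) := by
  obtain ⟨m, p, ξ, ζ, hp, hp1, hξ, hζ, rfl⟩ := hX
  refine ⟨m, p, fun j => marginal t₀ (ξ j), ζ, hp, hp1, fun j => (hξ j).marginal t₀, hζ, ?_⟩
  rw [(isLinearMap_marginalId t₀).map_sum_smul]
  simp only [marginalId_kronecker]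

theorem trace_marginalId (hd : d ≠ 0) (t₀ : Fin k)
    (X : Matrix ((Fin k → Fin d) × Fin n) ((Fin k → Fin d) × Fin n) ℂ) :
    (marginalId t₀ X).trace = X.trace := by
  rw [marginalId, trace_smul, trace_sum]
  simp only [Matrix.trace, diag_apply, submatrix_apply, Prod.map_apply, id_eq,
    Fintype.sum_prod_type, smul_eq_mul]
  rw [Finset.sum_comm, Fintype.sum_sum_update t₀ fun g => ∑ r, X (g, r) (g, r), Fintype.card_fin,
    nsmul_eq_mul, ← mul_assoc, inv_mul_cancel₀ (Nat.cast_ne_zero.mpr hd), one_mul]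

end Marginal

section Embedding

variable {d k n : ℕ} {E : Matrix (Fin d) (Fin d) ℂ → Matrix (Fin d) (Fin d) ℂ} {t₀ : Fin k}
  {τ : Fin k → Matrix (Fin d) (Fin d) ℂ} {Y : Matrix (Fin d × Fin n) (Fin d × Fin n) ℂ}

def embedAt (t₀ : Fin k) (τ : Fin k → Matrix (Fin d) (Fin d) ℂ)
    (Y : Matrix (Fin d × Fin n) (Fin d × Fin n) ℂ) :
    Matrix ((Fin k → Fin d) × Fin n) ((Fin k → Fin d) × Fin n) ℂ :=
  of fun p q => Y (p.1 t₀, p.2) (q.1 t₀, q.2) * ∏ t ∈ Finset.univ.erase t₀, τ t (p.1 t) (q.1 t)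

theorem embedAt_congr {τ' : Fin k → Matrix (Fin d) (Fin d) ℂ} (h : ∀ t ≠ t₀, τ t = τ' t) :
    embedAt t₀ τ Y = embedAt t₀ τ' Y := by
  ext p q
  simp only [embedAt, of_apply]
  congr 1
  exact Finset.prod_congr rfl fun t ht => by rw [h t (Finset.ne_of_mem_erase ht)]

theorem tensorId_applyAt_embedAt_of_ne (hE : IsLinearMap ℂ E) {t : Fin k} (ht : t ≠ t₀) :
    tensorId (applyAt E t) n (embedAt t₀ τ Y) = embedAt t₀ (Function.update τ t (E (τ t))) Y := by
  have ht' : t ∈ Finset.univ.erase t₀ := Finset.mem_erase.mpr ⟨ht, Finset.mem_univ t⟩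
  ext ⟨f, r⟩ ⟨f', r'⟩
  have hblock :
      (of fun a b => embedAt t₀ τ Y (Function.update f t a, r) (Function.update f' t b, r'))
      = (Y (f t₀, r) (f' t₀, r') * ∏ s ∈ Finset.univ.erase t₀ \ {t}, τ s (f s) (f' s)) • τ t := by
    ext a b
    simp only [embedAt, of_apply, Matrix.smul_apply, smul_eq_mul, Function.update_of_ne ht.symm,
      Function.apply_update₂ (fun s => τ s), Finset.prod_update_of_mem ht']
    ring
  simp only [tensorId, applyAt, of_apply]
  rw [hblock, hE.map_smul]
  simp only [embedAt, of_apply, Matrix.smul_apply, smul_eq_mul,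
    Function.apply_update (fun s (M : Matrix (Fin d) (Fin d) ℂ) => M (f s) (f' s)),
    Finset.prod_update_of_mem ht']
  ring

theorem tensorId_applyAt_self_embedAt (hE : IsLinearMap ℂ E) :
    tensorId (applyAt E t₀) n (embedAt t₀ τ Y) = embedAt t₀ τ (tensorId E n Y) := by
  have ht₀ : t₀ ∉ Finset.univ.erase t₀ := Finset.notMem_erase t₀ _
  ext ⟨f, r⟩ ⟨f', r'⟩
  have hblock :
      (of fun a b => embedAt t₀ τ Y (Function.update f t₀ a, r) (Function.update f' t₀ b, r'))
      = (∏ s ∈ Finset.univ.erase t₀, τ s (f s) (f' s)) • of fun a b => Y (a, r) (b, r') := by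
    ext a b
    simp only [embedAt, of_apply, Matrix.smul_apply, smul_eq_mul, Function.update_self,
      Function.apply_update₂ (fun s => τ s), Finset.prod_update_of_notMem ht₀]
    ring
  simp only [tensorId, applyAt, of_apply]
  rw [hblock, hE.map_smul]
  simp only [embedAt, of_apply, Matrix.smul_apply, smul_eq_mul]
  ring

theorem foldr_embedAt (hE : IsLinearMap ℂ E) {l : List (Fin k)} (hl : l.Nodup) :
    l.foldr (fun t => tensorId (applyAt E t) n) (embedAt t₀ τ Y)
      = embedAt t₀ (fun t => if t ∈ l then E (τ t) else τ t)
          (if t₀ ∈ l then tensorId E n Y else Y) := by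
  induction l with
  | nil => simp
  | cons a l ih =>
    obtain ⟨ha, hl⟩ := List.nodup_cons.mp hl
    rw [List.foldr_cons, ih hl]
    by_cases hat : a = t₀
    · subst hat
      rw [if_neg ha, tensorId_applyAt_self_embedAt hE, if_pos List.mem_cons_self]
      exact embedAt_congr fun t ht => by simp [ht]
    · rw [tensorId_applyAt_embedAt_of_ne hE hat, if_neg ha]
      congr 1
      · funext t
        by_cases hta : t = a <;> simp [hta]
      · simp [Ne.symm hat]

theorem tensorId_tensorPow_embedAt (hE : IsLinearMap ℂ E) :
    tensorId (tensorPow E k) n (embedAt t₀ τ Y)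
      = embedAt t₀ (fun t => E (τ t)) (tensorId E n Y) := by
  rw [tensorId_tensorPow, foldr_embedAt hE (List.nodup_finRange k)]
  simp

theorem marginalId_embedAt (hτ : ∀ t ≠ t₀, (τ t).trace = 1) :
    marginalId t₀ (embedAt t₀ τ Y) = Y := by
  ext ⟨c, r⟩ ⟨c', r'⟩
  have hd : (d : ℂ) ≠ 0 := Nat.cast_ne_zero.mpr c.pos.ne'
  simp only [marginalId, embedAt, Matrix.smul_apply, Matrix.sum_apply, submatrix_apply, of_apply,
    Prod.map_apply, id_eq, Function.update_self, smul_eq_mul, Function.apply_update₂ (fun s => τ s),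
    Finset.prod_update_of_notMem (Finset.notMem_erase t₀ _)]
  have hprod : ∏ t ∈ Finset.univ.erase t₀, ∑ b, τ t b b = 1 :=
    Finset.prod_eq_one fun t ht => hτ t (Finset.ne_of_mem_erase ht)
  rw [← Finset.mul_sum, Fintype.sum_prod_erase t₀ fun t b => τ t b b, hprod, Fintype.card_fin]
  field_simp

theorem embedAt_vecMulVec (v : Fin d → ℂ) :
    embedAt t₀ (fun _ => vecMulVec v (star v)) Y
      = diagonal (fun p => ∏ t ∈ Finset.univ.erase t₀, v (p.1 t))
        * Y.submatrix (fun p => (p.1 t₀, p.2)) (fun p => (p.1 t₀, p.2))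
        * (diagonal (fun p => ∏ t ∈ Finset.univ.erase t₀, v (p.1 t)))ᴴ := by
  ext p q
  simp [embedAt, vecMulVec_apply, Finset.prod_mul_distrib, star_prod, diagonal_mul, mul_diagonal]
  ring

theorem IsState.embedAt_vecMulVec (hY : IsState Y) {v : Fin d → ℂ}
    (hv : (vecMulVec v (star v)).trace = 1) :
    IsState (embedAt t₀ (fun _ => vecMulVec v (star v)) Y) := by
  obtain ⟨c, _⟩ := hY.nonempty
  refine ⟨?_, ?_⟩
  · rw [_root_.embedAt_vecMulVec]
    exact (hY.1.submatrix _).mul_mul_conjTranspose_same _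
  · rw [← trace_marginalId c.pos.ne' t₀, marginalId_embedAt fun _ _ => hv, hY.2]

end Embedding

theorem isEB_of_isEB_tensorPow {d k : ℕ} {E : Matrix (Fin d) (Fin d) ℂ → Matrix (Fin d) (Fin d) ℂ}
    (hE : IsLinearMap ℂ E) (htr : ∀ X, (E X).trace = X.trace) (hk : 0 < k)
    (hEB : IsEB (tensorPow E k)) : IsEB E := by
  intro n hn ω hω
  obtain ⟨z, _⟩ := hω.nonempty
  let t₀ : Fin k := ⟨0, hk⟩
  let v : Fin d → ℂ := Pi.single z 1
  have hv : (vecMulVec v (star v)).trace = 1 := by simp [v, trace_vecMulVec]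
  have hsep := (hEB n hn _ (hω.embedAt_vecMulVec (t₀ := t₀) hv)).marginalId t₀
  rwa [tensorId_tensorPow_embedAt hE, marginalId_embedAt fun t _ => by rw [htr, hv]] at hsep

/-- For every `k ≥ 2`, the `k`-fold tensor power of a channel `E` is
entanglement-breaking if and only if `E` itself is entanglement-breaking;
that is, `T_{k-LEB} = T¹_{EB}`. -/
theorem stmt_12 (d : ℕ)
    (E : Matrix (Fin d) (Fin d) ℂ → Matrix (Fin d) (Fin d) ℂ)
    (hE : IsChannel E) :
    ∀ k : ℕ, 2 ≤ k → (IsEB (tensorPow E k) ↔ IsEB E) := by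
  intro k hk
  have hlin : IsLinearMap ℂ E := .of_smul_add hE.1
  exact ⟨isEB_of_isEB_tensorPow hlin hE.2.1 (by omega), fun hEB => isEB_tensorPow hlin hEB k⟩
end

section
/- For 0 ≤ λ ≤ 1/3, the two-qubit Werner state Ω_λ = λ·P₊ + (1−λ)·I₄/4 is separable; equivalently, for λ ≤ 1/3 the qubit depolarizing channel E_λ applied to one half of a maximally entangled pair yields a separable state. -/
open Matrix
open scoped Kronecker ComplexOrder

noncomputable def wc : ℂ := ((Real.sqrt 2 : ℝ) : ℂ)⁻¹

lemma wc_star : star wc = wc := by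
  simp [wc, Complex.star_def, ← Complex.ofReal_inv]

lemma wc_conj : (starRingEnd ℂ) wc = wc := wc_star

lemma wc_def : ((Real.sqrt 2 : ℝ) : ℂ)⁻¹ = wc := rfl

lemma wc_sq : wc * wc = 1/2 := by
  rw [wc, ← mul_inv]
  norm_cast
  rw [Real.mul_self_sqrt (by norm_num)]
  norm_num

lemma outer_psd {n : Type} [Fintype n] (v : n → ℂ) :
    (Matrix.vecMulVec v (star v)).PosSemidef := by
  have h : Matrix.vecMulVec v (star v) = (Matrix.replicateCol Unit v) * (Matrix.replicateCol Unit v)ᴴ := by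
    ext i j
    simp [Matrix.vecMulVec, Matrix.mul_apply, Matrix.replicateCol, Matrix.conjTranspose_apply]
  rw [h]
  exact Matrix.posSemidef_self_mul_conjTranspose _

lemma wc_pow2 : wc^2 = 1/2 := by rw [sq, wc_sq]
lemma wc_pow4 : wc^4 = 1/4 := by
  have : wc^4 = (wc*wc)*(wc*wc) := by ring
  rw [this, wc_sq]; norm_num

noncomputable def sepVecA : Fin 10 → (Fin 2 → ℂ) := fun j =>
  if (j : ℕ) = 0 then ![1,0] else if (j : ℕ) = 1 then ![0,1]
  else if (j : ℕ) = 2 then ![wc,wc] else if (j : ℕ) = 3 then ![wc,-wc]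
  else if (j : ℕ) = 4 then ![wc,wc*Complex.I] else if (j : ℕ) = 5 then ![wc,-wc*Complex.I]
  else if (j : ℕ) = 6 then ![1,0] else if (j : ℕ) = 7 then ![1,0]
  else ![0,1]

noncomputable def sepVecB : Fin 10 → (Fin 2 → ℂ) := fun j =>
  if (j : ℕ) = 0 then ![1,0] else if (j : ℕ) = 1 then ![0,1]
  else if (j : ℕ) = 2 then ![wc,wc] else if (j : ℕ) = 3 then ![wc,-wc]
  else if (j : ℕ) = 4 then ![wc,-wc*Complex.I] else if (j : ℕ) = 5 then ![wc,wc*Complex.I]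
  else if (j : ℕ) = 6 then ![1,0] else if (j : ℕ) = 7 then ![0,1]
  else if (j : ℕ) = 8 then ![1,0] else ![0,1]


set_option maxHeartbeats 1600000 in
/-- For `0 ≤ λ ≤ 1/3` the two-qubit Werner state
`Ω_λ = λ P₊ + (1-λ) I₄/4` is separable; equivalently, the depolarizing channel `E_λ`
applied to one half of a maximally entangled pair yields a separable state. -/
theorem stmt_13 (lam : ℝ) (h0 : 0 ≤ lam) (h13 : lam ≤ 1 / 3) :
    IsSep ((lam : ℂ) • Pplus + ((1 - lam : ℝ) : ℂ) •
      ((4 : ℂ)⁻¹ • (1 : Matrix (Fin 2 × Fin 2) (Fin 2 × Fin 2) ℂ))) ∧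
    IsSep (rTensor (depol lam) Pplus) := by
  have key1 : ((lam : ℂ) • Pplus + ((1 - lam : ℝ) : ℂ) •
      ((4 : ℂ)⁻¹ • (1 : Matrix (Fin 2 × Fin 2) (Fin 2 × Fin 2) ℂ))) =
      ∑ j : Fin 10, (((if (j : ℕ) < 6 then lam/2 else (1-3*lam)/4) : ℝ) : ℂ) •
        (Matrix.vecMulVec (sepVecA j) (star (sepVecA j)) ⊗ₖ
         Matrix.vecMulVec (sepVecB j) (star (sepVecB j))) := by
    ext ⟨a,b⟩ ⟨c,d⟩
    simp only [Matrix.add_apply, Matrix.smul_apply, Matrix.sum_apply,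
      Matrix.kroneckerMap_apply, Matrix.one_apply, Pplus, psiPlus,
      Matrix.vecMulVec_apply, Pi.star_apply, smul_eq_mul, Fin.sum_univ_succ,
      Finset.sum_empty, Fin.sum_univ_zero, sepVecA, sepVecB, Fin.val_succ, Fin.val_zero]
    fin_cases a <;> fin_cases b <;> fin_cases c <;> fin_cases d <;>
      simp only [wc_def, wc_star, wc_conj, StarMul.star_mul, star_one, star_zero, star_neg,
        _root_.map_mul, _root_.map_one, _root_.map_zero, _root_.map_neg, Complex.conj_I, Prod.ext_iff,
        Matrix.vecHead, Matrix.vecTail, Matrix.cons_val_zero, Matrix.cons_val_one,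
        Matrix.head_cons, Function.comp] <;>
      (try norm_num [Matrix.vecHead, Matrix.vecTail, Function.comp, wc_conj]) <;>
      (try ring_nf) <;>
      (try simp only [wc_pow2, wc_pow4, wc_conj, wc_sq]) <;>
      (try norm_num) <;> (try ring_nf) <;>
      (try simp only [wc_pow2, wc_pow4]) <;> (try norm_num)
  have hsep : IsSep ((lam : ℂ) • Pplus + ((1 - lam : ℝ) : ℂ) •
      ((4 : ℂ)⁻¹ • (1 : Matrix (Fin 2 × Fin 2) (Fin 2 × Fin 2) ℂ))) := by
    refine ⟨10, fun j => if (j : ℕ) < 6 then lam/2 else (1-3*lam)/4,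
      fun j => Matrix.vecMulVec (sepVecA j) (star (sepVecA j)),
      fun j => Matrix.vecMulVec (sepVecB j) (star (sepVecB j)),
      ?_, ?_, ?_, ?_, key1⟩
    · intro j; dsimp only; split <;> linarith
    · simp [Fin.sum_univ_succ]; ring
    · intro j
      refine ⟨outer_psd _, ?_⟩
      fin_cases j <;>
        simp [Matrix.trace, Matrix.diag, Matrix.vecMulVec_apply, Fin.sum_univ_two,
          sepVecA, wc_conj, _root_.map_mul, Complex.conj_I] <;>
        ring_nf <;> simp [wc_pow2] <;> norm_num
    · intro j
      refine ⟨outer_psd _, ?_⟩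
      fin_cases j <;>
        simp [Matrix.trace, Matrix.diag, Matrix.vecMulVec_apply, Fin.sum_univ_two,
          sepVecB, wc_conj, _root_.map_mul, Complex.conj_I] <;>
        ring_nf <;> simp [wc_pow2] <;> norm_num
  have key2 : rTensor (depol lam) Pplus = (lam : ℂ) • Pplus + ((1 - lam : ℝ) : ℂ) •
      ((4 : ℂ)⁻¹ • (1 : Matrix (Fin 2 × Fin 2) (Fin 2 × Fin 2) ℂ)) := by
    ext ⟨a, b⟩ ⟨c, d⟩
    simp only [rTensor, depol, Matrix.of_apply, Matrix.add_apply, Matrix.smul_apply,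
      Matrix.one_apply, Pplus, psiPlus, Matrix.vecMulVec_apply, Pi.star_apply,
      Matrix.trace, Matrix.diag, Fin.sum_univ_two, smul_eq_mul, wc_def, wc_star]
    fin_cases a <;> fin_cases b <;> fin_cases c <;> fin_cases d <;>
      (try norm_num [Prod.ext_iff, wc_conj, wc_star]) <;>
      (try ring_nf) <;> (try simp only [wc_pow2, wc_pow4, wc_conj]) <;>
      (try norm_num) <;> (try ring_nf) <;>
      (try simp only [wc_pow2, wc_pow4]) <;> (try norm_num)
  exact ⟨hsep, key2 ▸ hsep⟩
end

section
/- Let E_λ be the qubit depolarizing channel and let ψ = √q₀·|00⟩ + √q₁·|11⟩ with q₀, q₁ ≥ 0, q₀ + q₁ = 1. Then the partial transpose (transposition on the second qubit) of the two-qubit state (E_λ⊗E_λ)[|ψ⟩⟨ψ|] has eigenvalues μ₁ = (1−λ)²/4 + λq₀, μ₂ = (1−λ)²/4 + λq₁, and μ± = (1 − λ² ± 4λ²√(q₀q₁))/4; in particular the partial transpose is positive semidefinite if and only if 1 − λ² − 4λ²√(q₀q₁) ≥ 0. -/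
open Matrix
open scoped Kronecker ComplexOrder

/-- The Schmidt-form two-qubit vector `√q₀ |00⟩ + √q₁ |11⟩`. -/
noncomputable def schmidtVec (q₀ q₁ : ℝ) : (Fin 2 × Fin 2) → ℂ :=
  fun p => if p = (0, 0) then ((Real.sqrt q₀ : ℝ) : ℂ)
    else if p = (1, 1) then ((Real.sqrt q₁ : ℝ) : ℂ) else 0

/-!
Computed entrywise, the partial transpose of `(E_λ ⊗ E_λ)[|ψ⟩⟨ψ|]` is diagonal with entries
`μ₁, b, b, μ₂` (where `b = (1 - λ²)/4`) except for the coupling `f = λ²√(q₀q₁)` between `|01⟩` and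
`|10⟩`. Its eigenvectors are therefore `|00⟩`, `|11⟩` and `|01⟩ ± |10⟩`, with eigenvalues `μ₁`, `μ₂`,
`b ± f`. Only `b - f` can be negative, so positivity is equivalent to `b - f ≥ 0`: necessity by
testing on the eigenvector `|01⟩ - |10⟩`, sufficiency from the spectral decomposition.
-/

theorem Matrix.PosSemidef.nonneg_of_mulVec_eq_smul {n 𝕜 : Type*} [Fintype n] [RCLike 𝕜]
    {M : Matrix n n 𝕜} (hM : M.PosSemidef) {v : n → 𝕜} (hv : v ≠ 0) {μ : 𝕜}
    (h : M *ᵥ v = μ • v) : 0 ≤ μ := by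
  have hnonneg : 0 * (star v ⬝ᵥ v) ≤ μ * (star v ⬝ᵥ v) := by
    simpa [h, dotProduct_smul, mul_comm] using hM.dotProduct_mulVec_nonneg v
  exact le_of_mul_le_mul_right hnonneg (dotProduct_star_self_pos_iff.mpr hv)

lemma fin2_prod_cases (p : Fin 2 × Fin 2) :
    p = (0, 0) ∨ p = (0, 1) ∨ p = (1, 0) ∨ p = (1, 1) := by
  obtain ⟨i, j⟩ := p
  fin_cases i <;> fin_cases j <;> simp

/-- The two-qubit matrix with diagonal `(a, b, b, d)` in the basis `00, 01, 10, 11` and the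
entry `f` coupling `01` with `10`. -/
def xMatrix (a b f d : ℝ) : Matrix (Fin 2 × Fin 2) (Fin 2 × Fin 2) ℂ :=
  Matrix.of fun p q =>
    if p = q then (if p = (0, 0) then (a : ℂ) else if p = (1, 1) then (d : ℂ) else (b : ℂ))
    else if p = q.swap ∧ p.1 ≠ p.2 then (f : ℂ) else 0

def tripletVec : Fin 2 × Fin 2 → ℂ := Pi.single (0, 1) 1 + Pi.single (1, 0) 1

def singletVec : Fin 2 × Fin 2 → ℂ := Pi.single (0, 1) 1 - Pi.single (1, 0) 1

lemma tripletVec_ne_zero : tripletVec ≠ 0 := fun h => by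
  simpa [tripletVec] using congrFun h (0, 1)

lemma singletVec_ne_zero : singletVec ≠ 0 := fun h => by
  simpa [singletVec] using congrFun h (0, 1)

section xMatrix

variable (a b f d : ℝ)

theorem xMatrix_mulVec_single_00 :
    xMatrix a b f d *ᵥ Pi.single (0, 0) 1 = (a : ℂ) • Pi.single (0, 0) 1 := by
  ext p
  rcases fin2_prod_cases p with rfl | rfl | rfl | rfl <;> simp [xMatrix]

theorem xMatrix_mulVec_single_11 :
    xMatrix a b f d *ᵥ Pi.single (1, 1) 1 = (d : ℂ) • Pi.single (1, 1) 1 := by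
  ext p
  rcases fin2_prod_cases p with rfl | rfl | rfl | rfl <;> simp [xMatrix]

theorem xMatrix_mulVec_tripletVec :
    xMatrix a b f d *ᵥ tripletVec = ((b + f : ℝ) : ℂ) • tripletVec := by
  ext p
  rcases fin2_prod_cases p with rfl | rfl | rfl | rfl <;>
    simp [xMatrix, tripletVec, mulVec_add, add_comm]

theorem xMatrix_mulVec_singletVec :
    xMatrix a b f d *ᵥ singletVec = ((b - f : ℝ) : ℂ) • singletVec := by
  ext p
  rcases fin2_prod_cases p with rfl | rfl | rfl | rfl <;>
    simp [xMatrix, singletVec, mulVec_sub]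

theorem xMatrix_eq_spectral_sum :
    xMatrix a b f d =
      (a : ℂ) • vecMulVec (Pi.single (0, 0) 1) (star (Pi.single (0, 0) 1)) +
      (d : ℂ) • vecMulVec (Pi.single (1, 1) 1) (star (Pi.single (1, 1) 1)) +
      (((b + f) / 2 : ℝ) : ℂ) • vecMulVec tripletVec (star tripletVec) +
      (((b - f) / 2 : ℝ) : ℂ) • vecMulVec singletVec (star singletVec) := by
  ext p q
  rcases fin2_prod_cases p with rfl | rfl | rfl | rfl <;>
    rcases fin2_prod_cases q with rfl | rfl | rfl | rfl <;>
    simp [xMatrix, tripletVec, singletVec, vecMulVec_apply] <;> ring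

theorem xMatrix_posSemidef_iff (ha : 0 ≤ a) (hd : 0 ≤ d) (hbf : 0 ≤ b + f) :
    (xMatrix a b f d).PosSemidef ↔ 0 ≤ b - f := by
  refine ⟨fun h => ?_, fun h => ?_⟩
  · exact_mod_cast h.nonneg_of_mulVec_eq_smul singletVec_ne_zero (xMatrix_mulVec_singletVec ..)
  · rw [xMatrix_eq_spectral_sum]
    have hpsd := posSemidef_vecMulVec_self_star (R := ℂ) (n := Fin 2 × Fin 2)
    refine (((hpsd _).smul ?_).add ((hpsd _).smul ?_)).add ((hpsd _).smul ?_) |>.add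
      ((hpsd _).smul ?_) <;> norm_cast <;> positivity

end xMatrix

theorem ptB_tensorMap_depol_schmidtVec (lam : ℝ) {q₀ q₁ : ℝ} (hq₀ : 0 ≤ q₀) (hq₁ : 0 ≤ q₁) :
    ptB (tensorMap (depol lam) (depol lam)
        (vecMulVec (schmidtVec q₀ q₁) (star (schmidtVec q₀ q₁)))) =
      xMatrix ((1 - lam) ^ 2 / 4 * (q₀ + q₁) + lam * q₀) ((1 - lam ^ 2) / 4 * (q₀ + q₁))
        (lam ^ 2 * Real.sqrt (q₀ * q₁)) ((1 - lam) ^ 2 / 4 * (q₀ + q₁) + lam * q₁) := by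
  obtain ⟨s, hs, rfl⟩ : ∃ s, 0 ≤ s ∧ s ^ 2 = q₀ := ⟨_, Real.sqrt_nonneg _, Real.sq_sqrt hq₀⟩
  obtain ⟨t, ht, rfl⟩ : ∃ t, 0 ≤ t ∧ t ^ 2 = q₁ := ⟨_, Real.sqrt_nonneg _, Real.sq_sqrt hq₁⟩
  rw [← mul_pow, Real.sqrt_sq (mul_nonneg hs ht)]
  ext p q
  rcases fin2_prod_cases p with rfl | rfl | rfl | rfl <;>
    rcases fin2_prod_cases q with rfl | rfl | rfl | rfl <;>
    simp [ptB, tensorMap, lTensor, rTensor, depol, schmidtVec, xMatrix, trace_fin_two,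
      vecMulVec_apply, Real.sqrt_sq, hs, ht] <;> ring

/-- the partial transpose of `(E_λ ⊗ E_λ)[|ψ⟩⟨ψ|]` for
`ψ = √q₀|00⟩ + √q₁|11⟩` has eigenvalues `μ₁`, `μ₂`, `μ₊`, `μ₋`, and is positive
semidefinite iff `1 - λ² - 4λ²√(q₀q₁) ≥ 0`. -/
theorem stmt_14 (lam q₀ q₁ : ℝ) (h0 : 0 ≤ lam) (h1 : lam ≤ 1)
    (hq₀ : 0 ≤ q₀) (hq₁ : 0 ≤ q₁) (hq : q₀ + q₁ = 1) :
    (∃ v : (Fin 2 × Fin 2) → ℂ, v ≠ 0 ∧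
      (ptB (tensorMap (depol lam) (depol lam)
        (Matrix.vecMulVec (schmidtVec q₀ q₁) (star (schmidtVec q₀ q₁))))).mulVec v
        = (((1 - lam) ^ 2 / 4 + lam * q₀ : ℝ) : ℂ) • v) ∧
    (∃ v : (Fin 2 × Fin 2) → ℂ, v ≠ 0 ∧
      (ptB (tensorMap (depol lam) (depol lam)
        (Matrix.vecMulVec (schmidtVec q₀ q₁) (star (schmidtVec q₀ q₁))))).mulVec v
        = (((1 - lam) ^ 2 / 4 + lam * q₁ : ℝ) : ℂ) • v) ∧
    (∃ v : (Fin 2 × Fin 2) → ℂ, v ≠ 0 ∧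
      (ptB (tensorMap (depol lam) (depol lam)
        (Matrix.vecMulVec (schmidtVec q₀ q₁) (star (schmidtVec q₀ q₁))))).mulVec v
        = (((1 - lam ^ 2 + 4 * lam ^ 2 * Real.sqrt (q₀ * q₁)) / 4 : ℝ) : ℂ) • v) ∧
    (∃ v : (Fin 2 × Fin 2) → ℂ, v ≠ 0 ∧
      (ptB (tensorMap (depol lam) (depol lam)
        (Matrix.vecMulVec (schmidtVec q₀ q₁) (star (schmidtVec q₀ q₁))))).mulVec v
        = (((1 - lam ^ 2 - 4 * lam ^ 2 * Real.sqrt (q₀ * q₁)) / 4 : ℝ) : ℂ) • v) ∧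
    ((ptB (tensorMap (depol lam) (depol lam)
        (Matrix.vecMulVec (schmidtVec q₀ q₁) (star (schmidtVec q₀ q₁))))).PosSemidef ↔
      0 ≤ 1 - lam ^ 2 - 4 * lam ^ 2 * Real.sqrt (q₀ * q₁)) := by
  rw [ptB_tensorMap_depol_schmidtVec lam hq₀ hq₁, hq, mul_one]
  have hsq := Real.sqrt_nonneg (q₀ * q₁)
  refine ⟨⟨_, Pi.single_ne_zero_iff.mpr one_ne_zero, xMatrix_mulVec_single_00 ..⟩,
    ⟨_, Pi.single_ne_zero_iff.mpr one_ne_zero, xMatrix_mulVec_single_11 ..⟩,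
    ⟨_, tripletVec_ne_zero, (xMatrix_mulVec_tripletVec ..).trans (by congr 2; ring)⟩,
    ⟨_, singletVec_ne_zero, (xMatrix_mulVec_singletVec ..).trans (by congr 2; ring)⟩, ?_⟩
  rw [xMatrix_posSemidef_iff _ _ _ _ (by positivity) (by positivity) (by nlinarith)]
  constructor <;> intro h <;> linarith
end
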